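/- Let p and q be positive integers and let π be a partition of [p+q] with no (p,q)-connecting block, so that π = π_ext ∪ π_int where π_ext is a partition of {1,...,p} and π_int is a partition of {p+1,...,p+q}. Then π ∈ NC_ann(p,q) if and only if π_ext ∈ NC_disc({1,...,p}) and π_int ∈ NC_disc({p+1,...,p+q}). -/

import Mathlib

/-- The permutation induced by `f` on the subset `B`: an element `b` is sent to the first
element of the sequence `f b, f (f b), f (f (f b)), ...` that lies in `B`
(and is left fixed if no iterate ever returns to `B`). -/
noncomputable def induced {α : Type*} (f : α → α) (B : Set α) (b : α) : α := by
  classical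
  exact if h : ∃ k, 0 < k ∧ f^[k] b ∈ B then f^[Nat.find h] b else b

/-- `A` is an orbit of the permutation `τ`. -/
def IsOrbit {α : Type*} (τ : Equiv.Perm α) (A : Set α) : Prop :=
  ∃ a, A = {b | τ.SameCycle a b}

/-- The number of orbits of `τ` (fixed points count as orbits). -/
noncomputable def numOrbits {α : Type*} (τ : Equiv.Perm α) : ℕ :=
  Set.ncard {A : Set α | IsOrbit τ A}

/-- `induced f S` acts on `a, b, c` as the 3-cycle `(a, b, c)`. -/
def MapsCyc3 {α : Type*} (f : α → α) (S : Set α) (a b c : α) : Prop :=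
  induced f S a = b ∧ induced f S b = c ∧ induced f S c = a

/-- `induced f S` acts on `a, b, c, d` as the 4-cycle `(a, b, c, d)`. -/
def MapsCyc4 {α : Type*} (f : α → α) (S : Set α) (a b c d : α) : Prop :=
  induced f S a = b ∧ induced f S b = c ∧ induced f S c = d ∧ induced f S d = a

/-- `induced f S` acts on `a, b, c, d` as the product of transpositions `(a, c)(b, d)`. -/
def MapsSwap2 {α : Type*} (f : α → α) (S : Set α) (a b c d : α) : Prop :=
  induced f S a = c ∧ induced f S c = a ∧ induced f S b = d ∧ induced f S d = b

/-- `induced f S` acts on `x, y` as the transposition `(x, y)`. -/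
def MapsSwap {α : Type*} (f : α → α) (S : Set α) (x y : α) : Prop :=
  induced f S x = y ∧ induced f S y = x

/-- `σ` is standard with respect to the "forward cycle" `γ₀`, i.e. `σ∣B = γ₀∣B` for
every orbit `B` of `σ`. -/
def DiscStandardRel {n : ℕ} (γ₀ σ : Equiv.Perm (Fin n)) : Prop :=
  ∀ A : Set (Fin n), IsOrbit σ A → ∀ b ∈ A, induced (⇑σ) A b = induced (⇑γ₀) A b

/-- The orbit partition of `σ` has no crossing: there are no `a < b < c < d` with
`a, c` in one orbit and `b, d` in a different orbit. -/
def OrbitsNoCrossing {n : ℕ} (σ : Equiv.Perm (Fin n)) : Prop :=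
  ¬ ∃ a b c d : Fin n, a < b ∧ b < c ∧ c < d ∧
      σ.SameCycle a c ∧ σ.SameCycle b d ∧ ¬ σ.SameCycle a b

/-- Disc non-crossing relative to a given forward cycle `γ₀`. -/
def DiscNCRel {n : ℕ} (γ₀ σ : Equiv.Perm (Fin n)) : Prop :=
  DiscStandardRel γ₀ σ ∧ OrbitsNoCrossing σ

/-- The set `S_disc-nc(n)` of disc non-crossing permutations of `[n]`
(here `[n] = {1, …, n}` is modelled by `Fin n`, and the forward cycle
`γ₀ = (1, 2, …, n)` is `finRotate n`). -/
def DiscNC {n : ℕ} (σ : Equiv.Perm (Fin n)) : Prop :=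
  DiscNCRel (finRotate n) σ

/-- The external points `{1, …, p}` (0-indexed: values `< p`). -/
def extSet (p q : ℕ) : Set (Fin (p + q)) := {i | (i : ℕ) < p}

/-- The internal points `{p+1, …, p+q}` (0-indexed: values `≥ p`). -/
def intSet (p q : ℕ) : Set (Fin (p + q)) := {i | p ≤ (i : ℕ)}

/-- `γ_ext = (1, 2, …, p)`, the forward cycle on the external points. -/
def gammaExt (p q : ℕ) : Equiv.Perm (Fin (p + q)) :=
  ((List.finRange (p + q)).take p).formPerm

/-- `γ_int = (p+1, p+2, …, p+q)`, the forward cycle on the internal points. -/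
def gammaInt (p q : ℕ) : Equiv.Perm (Fin (p + q)) :=
  ((List.finRange (p + q)).drop p).formPerm

/-- `γ = γ_ext · γ_int`. -/
def gammaAnn (p q : ℕ) : Equiv.Perm (Fin (p + q)) := gammaExt p q * gammaInt p q

/-- `λ_{x,y}`: the permutation fixing `x` and `y` and cycling the remaining points as
`(γ_ext(x), γ_ext²(x), …, γ_ext^{p-1}(x), γ_int(y), γ_int²(y), …, γ_int^{q-1}(y))`. -/
def lamPerm (p q : ℕ) (x y : Fin (p + q)) : Equiv.Perm (Fin (p + q)) :=
  (((List.range (p - 1)).map fun k => (gammaExt p q ^ (k + 1)) x) ++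
    ((List.range (q - 1)).map fun k => (gammaInt p q ^ (k + 1)) y)).formPerm

/-- `τ` is standard in `(p,q)`-annular sense. -/
def AnnStandard (p q : ℕ) (τ : Equiv.Perm (Fin (p + q))) : Prop :=
  (∀ A : Set (Fin (p + q)), IsOrbit τ A →
    (∀ b ∈ A ∩ extSet p q,
        induced (⇑τ) (A ∩ extSet p q) b = induced (⇑(gammaExt p q)) (A ∩ extSet p q) b) ∧
    (∀ b ∈ A ∩ intSet p q,
        induced (⇑τ) (A ∩ intSet p q) b = induced (⇑(gammaInt p q)) (A ∩ intSet p q) b)) ∧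
  (∀ A : Set (Fin (p + q)), IsOrbit τ A →
    (A ∩ extSet p q).Nonempty → (A ∩ intSet p q).Nonempty →
    (∃! a, a ∈ A ∩ extSet p q ∧ τ a ∈ intSet p q) ∧
    (∃! a, a ∈ A ∩ intSet p q ∧ τ a ∈ extSet p q))

/-- The annular crossing pattern (AC-1). -/
def AC1 (p q : ℕ) (τ : Equiv.Perm (Fin (p + q))) : Prop :=
  ∃ a b c d : Fin (p + q), List.Pairwise (· ≠ ·) [a, b, c, d] ∧
    MapsCyc4 (⇑(gammaAnn p q)) {a, b, c, d} a b c d ∧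
    MapsSwap2 (⇑τ) {a, b, c, d} a b c d

/-- The annular crossing pattern (AC-2). -/
def AC2 (p q : ℕ) (τ : Equiv.Perm (Fin (p + q))) : Prop :=
  ∃ a b c x y : Fin (p + q), List.Pairwise (· ≠ ·) [a, b, c, x, y] ∧
    x ∈ extSet p q ∧ y ∈ intSet p q ∧
    MapsCyc3 (⇑(lamPerm p q x y)) {a, b, c} a b c ∧
    MapsCyc3 (⇑τ) {a, b, c, x, y} a c b ∧
    MapsSwap (⇑τ) {a, b, c, x, y} x y

/-- The annular crossing pattern (AC-3). -/
def AC3 (p q : ℕ) (τ : Equiv.Perm (Fin (p + q))) : Prop :=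
  ∃ a b c d x y : Fin (p + q), List.Pairwise (· ≠ ·) [a, b, c, d, x, y] ∧
    x ∈ extSet p q ∧ y ∈ intSet p q ∧
    MapsCyc4 (⇑(lamPerm p q x y)) {a, b, c, d} a b c d ∧
    MapsSwap2 (⇑τ) {a, b, c, d, x, y} a b c d ∧
    MapsSwap (⇑τ) {a, b, c, d, x, y} x y

/-- The set `S_ann-nc(p,q)` of `(p,q)`-annular non-crossing permutations. -/
def AnnNC (p q : ℕ) (τ : Equiv.Perm (Fin (p + q))) : Prop :=
  AnnStandard p q τ ∧ ¬ AC1 p q τ ∧ ¬ AC2 p q τ ∧ ¬ AC3 p q τ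

/-- A `(p,q)`-connecting set: meets both the external and internal points. -/
def ConnectingBlock (p q : ℕ) (B : Set (Fin (p + q))) : Prop :=
  (B ∩ extSet p q).Nonempty ∧ (B ∩ intSet p q).Nonempty

/-- `τ` is `(p,q)`-connected: it has a `(p,q)`-connecting orbit. -/
def AnnConnected (p q : ℕ) (τ : Equiv.Perm (Fin (p + q))) : Prop :=
  ∃ A : Set (Fin (p + q)), IsOrbit τ A ∧ ConnectingBlock p q A

/-- A family of blocks has no crossing: no `a < b < c < d` with `a, c` in one block and
`b, d` in a different block. -/
def NoCrossing {n : ℕ} (ρ : Set (Set (Fin n))) : Prop :=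
  ¬ ∃ (a b c d : Fin n) (B C : Set (Fin n)), B ∈ ρ ∧ C ∈ ρ ∧ B ≠ C ∧
      a < b ∧ b < c ∧ c < d ∧ a ∈ B ∧ c ∈ B ∧ b ∈ C ∧ d ∈ C

/-!
A permutation without connecting orbits moves every point within its own circle, so the
patterns (AC-2) and (AC-3), which need an orbit meeting both circles, never occur. What remains
is (AC-1), and on one circle it is exactly a crossing: for `a < b < c < d` on the same circle,
`γ` induces the 4-cycle `(a, b, c, d)` on these points, while `τ` induces `(a, c)(b, d)` precisely
when `a, c` and `b, d` lie in two different orbits; conversely, the cyclic order of four points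
carrying an induced 4-cycle of `γ` can be rotated into increasing order. Finally every partition
whose blocks each lie on one circle is the orbit partition of an annular-standard permutation:
send each point to the next point of its block along `γ`, i.e. apply the first-return map of `γ`
on that block.
-/

open Equiv Function

section Induced

variable {α : Type*} {f g : α → α} {S : Set α} {b u v : α}

theorem exists_induced_eq_iterate (h : ∃ k, 0 < k ∧ f^[k] b ∈ S) :
    ∃ m, 0 < m ∧ f^[m] b ∈ S ∧ induced f S b = f^[m] b ∧
      ∀ j, 0 < j → f^[j] b ∈ S → m ≤ j := by
  classical
  refine ⟨Nat.find h, (Nat.find_spec h).1, (Nat.find_spec h).2, ?_, fun j hj hjS => ?_⟩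
  · simp only [induced, dif_pos h]
  · exact Nat.find_min' h ⟨hj, hjS⟩

theorem induced_eq_iterate {m : ℕ} (hm : 0 < m) (hmS : f^[m] b ∈ S)
    (hmin : ∀ j, 0 < j → j < m → f^[j] b ∉ S) : induced f S b = f^[m] b := by
  obtain ⟨m', hm', hm'S, heq, hmin'⟩ := exists_induced_eq_iterate ⟨m, hm, hmS⟩
  obtain rfl : m' = m := le_antisymm (hmin' m hm hmS) (not_lt.1 fun h => hmin m' hm' h hm'S)
  exact heq

theorem induced_eq_apply (hb : f b ∈ S) : induced f S b = f b :=
  induced_eq_iterate one_pos hb (by omega)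

theorem induced_of_not_exists (h : ¬ ∃ k, 0 < k ∧ f^[k] b ∈ S) : induced f S b = b := by
  classical
  simp only [induced, dif_neg h]

theorem induced_congr (h : ∀ k, f^[k] b = g^[k] b) : induced f S b = induced g S b := by
  by_cases he : ∃ k, 0 < k ∧ f^[k] b ∈ S
  · obtain ⟨m, hm, hmS, heq, hmin⟩ := exists_induced_eq_iterate he
    rw [heq, h, induced_eq_iterate hm (h m ▸ hmS)
      fun j hj hjm hjS => (hmin j hj (h j ▸ hjS)).not_gt hjm]
  · rw [induced_of_not_exists he, induced_of_not_exists (by simpa only [h] using he)]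

theorem exists_iterate_eq_induced_of_iterate_mem (h : induced f S u = v) {m : ℕ} (hm : 0 < m)
    (hmS : f^[m] u ∈ S) : ∃ j, 0 < j ∧ j ≤ m ∧ f^[j] u = v := by
  obtain ⟨j, hj, -, heq, hmin⟩ := exists_induced_eq_iterate ⟨m, hm, hmS⟩
  exact ⟨j, hj, hmin m hm hmS, heq ▸ h⟩

theorem exists_iterate_induced_eq_iterate (k : ℕ) (hk : f^[k] b ∈ S) :
    ∃ n, (induced f S)^[n] b = f^[k] b := by
  induction k using Nat.strong_induction_on generalizing b with
  | _ k ih =>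
    rcases Nat.eq_zero_or_pos k with rfl | hk0
    · exact ⟨0, rfl⟩
    obtain ⟨m, hm, hmS, heq, hmin⟩ := exists_induced_eq_iterate ⟨k, hk0, hk⟩
    have hmk := hmin k hk0 hk
    have hsplit : f^[k - m] (f^[m] b) = f^[k] b := by
      rw [← iterate_add_apply, Nat.sub_add_cancel hmk]
    obtain ⟨n, hn⟩ := ih (k - m) (by omega) (hsplit ▸ hk)
    exact ⟨n + 1, by rw [iterate_succ_apply, heq, hn, hsplit]⟩

end Induced

section InducedPerm

variable {α : Type*} [Finite α] {τ : Perm α} {S : Set α} {a b c x y : α}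

theorem exists_pos_iterate_mem (hb : b ∈ S) : ∃ k, 0 < k ∧ (⇑τ)^[k] b ∈ S :=
  ⟨orderOf τ, orderOf_pos τ, by rwa [Perm.iterate_eq_pow, pow_orderOf_eq_one, Perm.one_apply]⟩

theorem induced_mem (hb : b ∈ S) : induced (⇑τ) S b ∈ S := by
  obtain ⟨m, -, hmS, heq, -⟩ := exists_induced_eq_iterate (exists_pos_iterate_mem (τ := τ) hb)
  exact heq ▸ hmS

theorem sameCycle_induced (hb : b ∈ S) : τ.SameCycle b (induced (⇑τ) S b) := by
  obtain ⟨m, -, -, heq, -⟩ := exists_induced_eq_iterate (exists_pos_iterate_mem (τ := τ) hb)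
  rw [heq, Perm.iterate_eq_pow]
  exact Perm.sameCycle_pow_right.2 (Perm.SameCycle.refl τ b)

omit [Finite α] in
theorem eq_of_iterate_eq_of_first_return {m n : ℕ} (h : (⇑τ)^[m] x = (⇑τ)^[n] y)
    (hm : 0 < m) (hmn : m ≤ n) (hx : x ∈ S) (hmin : ∀ j, 0 < j → (⇑τ)^[j] y ∈ S → n ≤ j) :
    x = y := by
  have hxy : x = (⇑τ)^[n - m] y := by
    refine (τ.injective.iterate m) ?_
    rw [h, ← iterate_add_apply, Nat.add_sub_cancel' hmn]
  rcases Nat.eq_zero_or_pos (n - m) with h0 | hpos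
  · rw [hxy, h0, iterate_zero_apply]
  · exact absurd (hmin _ hpos (hxy ▸ hx)) (by omega)

theorem induced_injOn : Set.InjOn (induced (⇑τ) S) S := by
  intro x hx y hy hxy
  obtain ⟨mx, hmx, -, hx', hminx⟩ := exists_induced_eq_iterate (exists_pos_iterate_mem (τ := τ) hx)
  obtain ⟨my, hmy, -, hy', hminy⟩ := exists_induced_eq_iterate (exists_pos_iterate_mem (τ := τ) hy)
  have h : (⇑τ)^[mx] x = (⇑τ)^[my] y := by rw [← hx', ← hy', hxy]
  rcases le_total mx my with hle | hle
  · exact eq_of_iterate_eq_of_first_return h hmx hle hx hminy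
  · exact (eq_of_iterate_eq_of_first_return h.symm hmy hle hy hminx).symm

theorem Equiv.Perm.SameCycle.exists_iterate_induced_eq (h : τ.SameCycle x y) (hy : y ∈ S) :
    ∃ n, (induced (⇑τ) S)^[n] x = y := by
  obtain ⟨k, hk⟩ := h.exists_nat_pow_eq
  rw [← Perm.iterate_eq_pow] at hk
  exact hk ▸ exists_iterate_induced_eq_iterate k (hk ▸ hy)

theorem induced_eq_of_sameCycle (hx : x ∈ S) (hy : y ∈ S) (hxy : x ≠ y) (h : τ.SameCycle x y)
    (honly : ∀ z ∈ S, τ.SameCycle x z → z = x ∨ z = y) : induced (⇑τ) S x = y := by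
  refine (honly _ (induced_mem hx) (sameCycle_induced hx)).resolve_left fun hfix => hxy ?_
  obtain ⟨n, hn⟩ := h.exists_iterate_induced_eq hy
  rwa [iterate_fixed hfix] at hn

theorem not_sameCycle_of_induced_swap (hb : b ∈ S) (hba : b ≠ a) (hbc : b ≠ c)
    (hac : induced (⇑τ) S a = c) (hca : induced (⇑τ) S c = a) : ¬ τ.SameCycle a b := by
  intro h
  obtain ⟨n, hn⟩ := h.exists_iterate_induced_eq hb
  have hiter : ∀ n, (induced (⇑τ) S)^[n] a = a ∨ (induced (⇑τ) S)^[n] a = c := by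
    intro n
    induction n with
    | zero => exact Or.inl rfl
    | succ n ih =>
      rw [iterate_succ_apply']
      rcases ih with h | h <;> rw [h]
      exacts [Or.inr hac, Or.inl hca]
  rcases hiter n with h | h <;> rw [h] at hn
  exacts [hba hn.symm, hbc hn.symm]

theorem mapsSwap2_of_sameCycle {d : α} (hac : τ.SameCycle a c) (hbd : τ.SameCycle b d)
    (hab : ¬ τ.SameCycle a b) (hac' : a ≠ c) (hbd' : b ≠ d) :
    MapsSwap2 (⇑τ) {a, b, c, d} a b c d := by
  have hcls : ∀ z ∈ ({a, b, c, d} : Set α), (τ.SameCycle a z ∧ (z = a ∨ z = c)) ∨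
      (τ.SameCycle b z ∧ (z = b ∨ z = d)) := by
    simp only [Set.mem_insert_iff, Set.mem_singleton_iff]
    rintro z (rfl | rfl | rfl | rfl) <;> simp [hac, hbd, Perm.SameCycle.refl]
  have hsep : ∀ {x y}, τ.SameCycle a x → τ.SameCycle b y → ¬ τ.SameCycle x y :=
    fun hx hy hxy => hab (hx.trans (hxy.trans hy.symm))
  refine ⟨induced_eq_of_sameCycle (by simp) (by simp) hac' hac fun z hz hz' => ?_,
    induced_eq_of_sameCycle (by simp) (by simp) hac'.symm hac.symm fun z hz hz' => ?_,
    induced_eq_of_sameCycle (by simp) (by simp) hbd' hbd fun z hz hz' => ?_,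
    induced_eq_of_sameCycle (by simp) (by simp) hbd'.symm hbd.symm fun z hz hz' => ?_⟩ <;>
  rcases hcls z hz with ⟨haz, hz⟩ | ⟨hbz, hz⟩
  · exact hz
  · exact (hsep (.refl τ a) hbz hz').elim
  · exact hz.symm
  · exact (hsep hac hbz hz').elim
  · exact (hsep haz (.refl τ b) hz'.symm).elim
  · exact hz
  · exact (hsep haz hbd hz'.symm).elim
  · exact hz.symm

end InducedPerm

section FirstReturnPerm

variable {α : Type*} [Finite α] {γ τ : Perm α} {B : Set α} {x : α}

omit [Finite α] in
theorem iterate_eq_of_eqOn {f g : α → α} {s : Set α} (h : Set.EqOn f g s)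
    (hg : Set.MapsTo g s s) (hx : x ∈ s) (n : ℕ) : f^[n] x = g^[n] x := by
  induction n with
  | zero => rfl
  | succ n ih => rw [iterate_succ_apply', iterate_succ_apply', ih, h (hg.iterate n hx)]

theorem setOf_sameCycle_eq_of_eqOn_induced (hτ : Set.EqOn τ (induced γ B) B)
    (hB : ∀ y ∈ B, γ.SameCycle x y) (hx : x ∈ B) : {z | τ.SameCycle x z} = B := by
  have hmaps : Set.MapsTo (induced γ B) B B := fun _ hy => induced_mem hy
  ext z
  constructor
  · intro hz
    obtain ⟨n, rfl⟩ := hz.exists_nat_pow_eq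
    rw [← Perm.iterate_eq_pow, iterate_eq_of_eqOn hτ hmaps hx]
    exact hmaps.iterate n hx
  · intro hz
    obtain ⟨n, rfl⟩ := (hB z hz).exists_iterate_induced_eq hz
    rw [← iterate_eq_of_eqOn hτ hmaps hx, Perm.iterate_eq_pow]
    exact Perm.sameCycle_pow_right.2 (.refl τ x)

theorem exists_perm_setOf_isOrbit_eq (γ : Perm α) {π : Set (Set α)} (hπ : Setoid.IsPartition π)
    (hγ : ∀ B ∈ π, ∀ x ∈ B, ∀ y ∈ B, γ.SameCycle x y) :
    ∃ τ : Perm α, {A | IsOrbit τ A} = π ∧ ∀ B ∈ π, Set.EqOn τ (induced γ B) B := by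
  choose blk hblk using hπ.2
  have hmem : ∀ x, induced γ (blk x) x ∈ blk x := fun x => induced_mem (hblk x).1.2
  have hinj : Injective fun x => induced γ (blk x) x := by
    intro x y (hxy : induced γ (blk x) x = induced γ (blk y) y)
    have hxy' : blk x = blk y :=
      (hπ.2 _).unique ⟨(hblk x).1.1, hmem x⟩ ⟨(hblk y).1.1, hxy ▸ hmem y⟩
    rw [hxy'] at hxy
    exact induced_injOn (hxy' ▸ (hblk x).1.2) (hblk y).1.2 hxy
  let τ : Perm α := Equiv.ofBijective _ (Finite.injective_iff_bijective.1 hinj)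
  have hτ : ∀ B ∈ π, Set.EqOn τ (induced γ B) B := fun B hB x hx => by
    simp only [τ, Equiv.ofBijective_apply, ← (hblk x).2 B ⟨hB, hx⟩]
  have horbit : ∀ x, {z | τ.SameCycle x z} = blk x := fun x =>
    setOf_sameCycle_eq_of_eqOn_induced (hτ _ (hblk x).1.1) (hγ _ (hblk x).1.1 x (hblk x).1.2)
      (hblk x).1.2
  refine ⟨τ, Set.ext fun A => ⟨?_, fun hA => ?_⟩, hτ⟩
  · rintro ⟨x, rfl⟩
    exact (horbit x).symm ▸ (hblk x).1.1
  · obtain ⟨x, hx⟩ := Set.nonempty_iff_ne_empty.2 fun h => hπ.1 (h ▸ hA)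
    exact ⟨x, by rw [horbit, (hblk x).2 A ⟨hA, hx⟩]⟩

end FirstReturnPerm

section Gamma

variable {p q : ℕ} {x y : Fin (p + q)} {S : Set (Fin (p + q))}

@[simp] theorem mem_extSet : x ∈ extSet p q ↔ (x : ℕ) < p := Iff.rfl

@[simp] theorem mem_intSet : x ∈ intSet p q ↔ p ≤ (x : ℕ) := Iff.rfl

theorem mem_take_finRange : x ∈ (List.finRange (p + q)).take p ↔ (x : ℕ) < p := by
  simp only [List.mem_take_iff_getElem, List.getElem_finRange, Fin.ext_iff, Fin.val_cast,
    List.length_finRange]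
  exact ⟨fun ⟨j, hj, h⟩ => by omega, fun h => ⟨x, by omega, rfl⟩⟩

theorem mem_drop_finRange : x ∈ (List.finRange (p + q)).drop p ↔ p ≤ (x : ℕ) := by
  simp only [List.mem_drop_iff_getElem, List.getElem_finRange, Fin.ext_iff, Fin.val_cast,
    List.length_finRange]
  exact ⟨fun ⟨j, hj, h⟩ => by omega, fun h => ⟨x - p, by omega, by omega⟩⟩

theorem gammaExt_apply_of_succ_lt (h : (x : ℕ) + 1 < p) :
    ((gammaExt p q x : Fin (p + q)) : ℕ) = x + 1 := by
  have := List.formPerm_apply_lt_getElem _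
    ((List.nodup_finRange (p + q)).sublist (List.take_sublist p _)) x
    (by simp only [List.length_take, List.length_finRange]; omega)
  simp only [List.getElem_take, List.getElem_finRange, Fin.cast_mk, Fin.eta] at this
  simp [gammaExt, this]

theorem gammaInt_apply_of_succ_lt (hx : p ≤ (x : ℕ)) (h : (x : ℕ) + 1 < p + q) :
    ((gammaInt p q x : Fin (p + q)) : ℕ) = x + 1 := by
  have := List.formPerm_apply_lt_getElem _
    ((List.nodup_finRange (p + q)).sublist (List.drop_sublist p _)) (x - p)
    (by simp only [List.length_drop, List.length_finRange]; omega)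
  simp only [List.getElem_drop, List.getElem_finRange, Fin.cast_mk,
    Nat.add_sub_cancel' hx] at this
  simp only [gammaInt, this]
  omega

theorem gammaAnn_apply_of_lt (hx : (x : ℕ) < p) : gammaAnn p q x = gammaExt p q x := by
  rw [gammaAnn, Perm.mul_apply, gammaInt,
    List.formPerm_apply_of_notMem (mt mem_drop_finRange.1 (by omega))]

theorem gammaAnn_apply_of_le (hx : p ≤ (x : ℕ)) : gammaAnn p q x = gammaInt p q x := by
  have : p ≤ ((gammaInt p q x : Fin (p + q)) : ℕ) :=
    mem_drop_finRange.1 (List.formPerm_apply_mem_of_mem (mem_drop_finRange.2 hx))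
  rw [gammaAnn, Perm.mul_apply, gammaExt,
    List.formPerm_apply_of_notMem (mt mem_take_finRange.1 (by omega))]

theorem gammaAnn_mem_extSet_iff : gammaAnn p q x ∈ extSet p q ↔ x ∈ extSet p q := by
  rcases lt_or_ge (x : ℕ) p with hx | hx
  · rw [gammaAnn_apply_of_lt hx]
    exact iff_of_true (mem_take_finRange.1 (List.formPerm_apply_mem_of_mem
      (mem_take_finRange.2 hx))) hx
  · rw [gammaAnn_apply_of_le hx]
    have : p ≤ ((gammaInt p q x : Fin (p + q)) : ℕ) :=
      mem_drop_finRange.1 (List.formPerm_apply_mem_of_mem (mem_drop_finRange.2 hx))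
    simp only [mem_extSet]
    omega

theorem iterate_gammaAnn_mem_extSet_iff (k : ℕ) :
    (⇑(gammaAnn p q))^[k] x ∈ extSet p q ↔ x ∈ extSet p q := by
  induction k with
  | zero => rfl
  | succ k ih => rw [iterate_succ_apply', gammaAnn_mem_extSet_iff, ih]

theorem gammaAnn_apply_val (h : (x : ℕ) + 1 ≠ p) (h' : (x : ℕ) + 1 < p + q) :
    ((gammaAnn p q x : Fin (p + q)) : ℕ) = x + 1 := by
  rcases lt_or_ge (x : ℕ) p with hx | hx
  · rw [gammaAnn_apply_of_lt hx, gammaExt_apply_of_succ_lt (by omega)]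
  · rw [gammaAnn_apply_of_le hx, gammaInt_apply_of_succ_lt hx h']

theorem iterate_gammaAnn_val (hxy : x ≤ y) (hside : x ∈ extSet p q ↔ y ∈ extSet p q) {j : ℕ}
    (hj : j ≤ (y : ℕ) - x) : (((⇑(gammaAnn p q))^[j] x : Fin (p + q)) : ℕ) = x + j := by
  induction j with
  | zero => rfl
  | succ j ih =>
    simp only [mem_extSet] at hside
    rw [iterate_succ_apply', gammaAnn_apply_val] <;> rw [ih (by omega)] <;> omega

theorem iterate_gammaAnn_sub (hxy : x ≤ y) (hside : x ∈ extSet p q ↔ y ∈ extSet p q) :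
    (⇑(gammaAnn p q))^[(y : ℕ) - x] x = y :=
  Fin.ext (by rw [iterate_gammaAnn_val hxy hside le_rfl]; omega)

theorem sameCycle_gammaAnn_iff :
    (gammaAnn p q).SameCycle x y ↔ (x ∈ extSet p q ↔ y ∈ extSet p q) := by
  refine ⟨fun h => ?_, fun hside => ?_⟩
  · obtain ⟨k, rfl⟩ := h.exists_nat_pow_eq
    rw [← Perm.iterate_eq_pow, iterate_gammaAnn_mem_extSet_iff]
  · have key : ∀ {x y : Fin (p + q)}, x ≤ y → (x ∈ extSet p q ↔ y ∈ extSet p q) →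
        (gammaAnn p q).SameCycle x y := fun hxy hside =>
      ⟨((_ : ℕ) : ℤ), by rw [zpow_natCast, ← Perm.iterate_eq_pow, iterate_gammaAnn_sub hxy hside]⟩
    rcases le_total x y with hxy | hyx
    exacts [key hxy hside, (key hyx hside.symm).symm]

theorem iterate_gammaExt (hx : x ∈ extSet p q) (k : ℕ) :
    (⇑(gammaExt p q))^[k] x = (⇑(gammaAnn p q))^[k] x := by
  induction k with
  | zero => rfl
  | succ k ih =>
    rw [iterate_succ_apply', iterate_succ_apply', ih,
      gammaAnn_apply_of_lt ((iterate_gammaAnn_mem_extSet_iff k).2 hx)]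

theorem iterate_gammaInt (hx : x ∈ intSet p q) (k : ℕ) :
    (⇑(gammaInt p q))^[k] x = (⇑(gammaAnn p q))^[k] x := by
  induction k with
  | zero => rfl
  | succ k ih =>
    have : x ∉ extSet p q := by simp only [mem_extSet, mem_intSet] at hx ⊢; omega
    rw [iterate_succ_apply', iterate_succ_apply', ih,
      gammaAnn_apply_of_le (not_lt.1 ((iterate_gammaAnn_mem_extSet_iff k).not.2 this))]

theorem induced_gammaAnn_eq_of_lt (hxy : x < y) (hside : x ∈ extSet p q ↔ y ∈ extSet p q)
    (hy : y ∈ S) (hgap : ∀ z ∈ S, ¬ (x < z ∧ z < y)) : induced (⇑(gammaAnn p q)) S x = y := by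
  rw [← iterate_gammaAnn_sub hxy.le hside]
  refine induced_eq_iterate (by omega) ((iterate_gammaAnn_sub hxy.le hside).symm ▸ hy)
    fun j hj hjy hjS => hgap _ hjS ?_
  have := iterate_gammaAnn_val hxy.le hside hjy.le
  constructor <;> omega

theorem lt_induced_gammaAnn_le (hxy : x < y) (hside : x ∈ extSet p q ↔ y ∈ extSet p q)
    (hy : y ∈ S) : x < induced (⇑(gammaAnn p q)) S x ∧ induced (⇑(gammaAnn p q)) S x ≤ y := by
  obtain ⟨j, hj, hjy, hv⟩ := exists_iterate_eq_induced_of_iterate_mem rfl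
    (show 0 < (y : ℕ) - x by omega) ((iterate_gammaAnn_sub hxy.le hside).symm ▸ hy)
  have := iterate_gammaAnn_val hxy.le hside hjy
  rw [hv] at this
  constructor <;> omega

end Gamma

theorem MapsCyc4.rotate {α : Type*} {f : α → α} {S : Set α} {a b c d : α}
    (h : MapsCyc4 f S a b c d) : MapsCyc4 f S b c d a :=
  ⟨h.2.1, h.2.2.1, h.2.2.2, h.1⟩

theorem MapsSwap2.rotate {α : Type*} {f : α → α} {S : Set α} {a b c d : α}
    (h : MapsSwap2 f S a b c d) : MapsSwap2 f S b c d a :=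
  ⟨h.2.2.1, h.2.2.2, h.2.1, h.1⟩

theorem NoCrossing.mono {n : ℕ} {ρ ρ' : Set (Set (Fin n))} (h : NoCrossing ρ) (hρ : ρ' ⊆ ρ) :
    NoCrossing ρ' :=
  fun ⟨a, b, c, d, B, C, hB, hC, hBC, hcross⟩ => h ⟨a, b, c, d, B, C, hρ hB, hρ hC, hBC, hcross⟩

theorem noCrossing_setOf_isOrbit_iff {n : ℕ} {τ : Perm (Fin n)} :
    NoCrossing {A | IsOrbit τ A} ↔ OrbitsNoCrossing τ := by
  constructor
  · rintro h ⟨a, b, c, d, hab, hbc, hcd, hac, hbd, hnab⟩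
    refine h ⟨a, b, c, d, _, _, ⟨a, rfl⟩, ⟨b, rfl⟩, fun hBC => hnab ?_, hab, hbc, hcd,
      .refl τ a, hac, .refl τ b, hbd⟩
    exact (Set.ext_iff.1 hBC b).2 (.refl τ b)
  · rintro h ⟨a, b, c, d, _, _, ⟨x, rfl⟩, ⟨y, rfl⟩, hBC, hab, hbc, hcd, ha, hc, hb, hd⟩
    refine h ⟨a, b, c, d, hab, hbc, hcd, ha.symm.trans hc, hb.symm.trans hd, fun hab' => hBC ?_⟩
    have hxy : τ.SameCycle x y := ha.trans (hab'.trans hb.symm)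
    exact Set.ext fun z => ⟨hxy.symm.trans, hxy.trans⟩

section Annulus

variable {p q : ℕ} {τ : Perm (Fin (p + q))} {a b c d x y : Fin (p + q)}

theorem mem_extSet_iff_of_not_connectingBlock {B : Set (Fin (p + q))}
    (hB : ¬ ConnectingBlock p q B) (hx : x ∈ B) (hy : y ∈ B) :
    x ∈ extSet p q ↔ y ∈ extSet p q := by
  by_contra h
  simp only [mem_extSet] at h
  rcases lt_or_ge (x : ℕ) p with hxp | hxp
  · exact hB ⟨⟨x, hx, hxp⟩, ⟨y, hy, show p ≤ (y : ℕ) by omega⟩⟩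
  · exact hB ⟨⟨y, hy, show (y : ℕ) < p by omega⟩, ⟨x, hx, hxp⟩⟩

theorem noCrossing_sides_iff {π : Set (Set (Fin (p + q)))}
    (hπ : ∀ B ∈ π, ¬ ConnectingBlock p q B) :
    NoCrossing {B | B ∈ π ∧ B ⊆ extSet p q} ∧ NoCrossing {B | B ∈ π ∧ B ⊆ intSet p q} ↔
      NoCrossing π := by
  refine ⟨?_, fun h => ⟨h.mono fun B hB => hB.1, h.mono fun B hB => hB.1⟩⟩
  rintro ⟨hext, hint⟩ ⟨a, b, c, d, B, C, hB, hC, hBC, hab, hbc, hcd, ha, hc, hb, hd⟩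
  have hside : ∀ {B}, B ∈ π → ∀ {x y}, x ∈ B → y ∈ B → ((x : ℕ) < p ↔ (y : ℕ) < p) :=
    fun hB _ _ hx hy => mem_extSet_iff_of_not_connectingBlock (hπ _ hB) hx hy
  rcases lt_or_ge (a : ℕ) p with hap | hap
  · have hsub : ∀ {D}, D ∈ π → ∀ {x}, x ∈ D → (x : ℕ) < p → D ⊆ extSet p q :=
      fun hD _ hx hxp z hz => (hside hD hx hz).1 hxp
    have hcp := (hside hB ha hc).1 hap
    exact hext ⟨a, b, c, d, B, C, ⟨hB, hsub hB ha hap⟩, ⟨hC, hsub hC hb (by omega)⟩, hBC,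
      hab, hbc, hcd, ha, hc, hb, hd⟩
  · have hsub : ∀ {D}, D ∈ π → ∀ {x}, x ∈ D → p ≤ (x : ℕ) → D ⊆ intSet p q :=
      fun hD _ hx hxp z hz => not_lt.1 fun hzp => (not_lt.2 hxp) ((hside hD hx hz).2 hzp)
    exact hint ⟨a, b, c, d, B, C, ⟨hB, hsub hB ha hap⟩, ⟨hC, hsub hC hb (by omega)⟩, hBC,
      hab, hbc, hcd, ha, hc, hb, hd⟩

theorem mem_extSet_iff_of_sameCycle (hconn : ¬ AnnConnected p q τ) (h : τ.SameCycle x y) :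
    x ∈ extSet p q ↔ y ∈ extSet p q :=
  mem_extSet_iff_of_not_connectingBlock (fun hc => hconn ⟨_, ⟨x, rfl⟩, hc⟩) (.refl τ x) h

theorem mapsCyc4_gammaAnn (hab : a < b) (hbc : b < c) (hcd : c < d)
    (hside : a ∈ extSet p q ↔ d ∈ extSet p q) :
    MapsCyc4 (⇑(gammaAnn p q)) {a, b, c, d} a b c d := by
  set S : Set (Fin (p + q)) := {a, b, c, d}
  have hS : a ∈ S ∧ b ∈ S ∧ c ∈ S ∧ d ∈ S := by simp [S]
  have step : ∀ {x y}, x < y → a ≤ x → y ≤ d → y ∈ S →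
      (∀ z, z = a ∨ z = b ∨ z = c ∨ z = d → ¬ (x < z ∧ z < y)) →
      induced (⇑(gammaAnn p q)) S x = y := fun hxy hax hyd hy hgap =>
    induced_gammaAnn_eq_of_lt hxy (by simp only [mem_extSet] at hside ⊢; omega) hy
      fun z hz => hgap z (by simpa [S] using hz)
  have h1 := step hab le_rfl (by omega) hS.2.1 (by rintro z (rfl | rfl | rfl | rfl) <;> omega)
  have h2 := step hbc hab.le (by omega) hS.2.2.1 (by rintro z (rfl | rfl | rfl | rfl) <;> omega)
  have h3 := step hcd (by omega) le_rfl hS.2.2.2 (by rintro z (rfl | rfl | rfl | rfl) <;> omega)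
  refine ⟨h1, h2, h3, ?_⟩
  -- `induced γ S` is injective on `S`, and `a` is the only value not yet taken.
  have hinj := induced_injOn (τ := gammaAnn p q) (S := S)
  rcases (induced_mem hS.2.2.2 : induced (⇑(gammaAnn p q)) S d ∈ S) with h | h | h | h
  · exact h
  · exact absurd (hinj hS.2.2.2 hS.1 (h.trans h1.symm)) (by omega)
  · exact absurd (hinj hS.2.2.2 hS.2.1 (h.trans h2.symm)) (by omega)
  · exact absurd (hinj hS.2.2.2 hS.2.2.1 (h.trans h3.symm)) (by omega)

theorem AC1_of_crossing (hab : a < b) (hbc : b < c) (hcd : c < d)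
    (hside : a ∈ extSet p q ↔ d ∈ extSet p q) (hac : τ.SameCycle a c) (hbd : τ.SameCycle b d)
    (hnab : ¬ τ.SameCycle a b) : AC1 p q τ :=
  ⟨a, b, c, d, (List.isChain_iff_pairwise.1 (by simp [hab, hbc, hcd])).imp ne_of_lt,
    mapsCyc4_gammaAnn hab hbc hcd hside,
    mapsSwap2_of_sameCycle hac hbd hnab (by omega) (by omega)⟩

theorem not_orbitsNoCrossing_of_min {S : Set (Fin (p + q))}
    (hS : a ∈ S ∧ b ∈ S ∧ c ∈ S ∧ d ∈ S) (hne : [a, b, c, d].Nodup)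
    (hmin : a ≤ b ∧ a ≤ c ∧ a ≤ d) (hγ : MapsCyc4 (⇑(gammaAnn p q)) S a b c d)
    (hτ : MapsSwap2 (⇑τ) S a b c d) : ¬ OrbitsNoCrossing τ := by
  simp only [List.nodup_cons, List.mem_cons, List.not_mem_nil, or_false, not_or] at hne
  have side : ∀ {x y}, x ∈ S → induced (⇑(gammaAnn p q)) S x = y →
      (x ∈ extSet p q ↔ y ∈ extSet p q) := fun hx h =>
    sameCycle_gammaAnn_iff.1 (h ▸ sameCycle_induced hx)
  have hsab := side hS.1 hγ.1
  have hsbc := side hS.2.1 hγ.2.1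
  have hscd := side hS.2.2.1 hγ.2.2.1
  have hac := lt_induced_gammaAnn_le (by omega) (hsab.trans hsbc) hS.2.2.1 (S := S)
  have had := lt_induced_gammaAnn_le (by omega) (hsab.trans (hsbc.trans hscd)) hS.2.2.2 (S := S)
  rw [hγ.1] at hac had
  have hbd := lt_induced_gammaAnn_le (by omega) (hsbc.trans hscd) hS.2.2.2 (S := S)
  rw [hγ.2.1] at hbd
  exact fun h => h ⟨a, b, c, d, hac.1, by omega, by omega, hτ.1 ▸ sameCycle_induced hS.1,
    hτ.2.2.1 ▸ sameCycle_induced hS.2.1,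
    not_sameCycle_of_induced_swap hS.2.1 (by omega) (by omega) hτ.1 hτ.2.1⟩

theorem not_orbitsNoCrossing_of_AC1 (h : AC1 p q τ) : ¬ OrbitsNoCrossing τ := by
  obtain ⟨a, b, c, d, hne, hγ, hτ⟩ := h
  -- rotate the configuration until its least element comes first
  rcases (by omega : (a ≤ b ∧ a ≤ c ∧ a ≤ d) ∨ (b ≤ c ∧ b ≤ d ∧ b ≤ a) ∨
      (c ≤ d ∧ c ≤ a ∧ c ≤ b) ∨ (d ≤ a ∧ d ≤ b ∧ d ≤ c)) with hmin | hmin | hmin | hmin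
  · exact not_orbitsNoCrossing_of_min (by simp) hne hmin hγ hτ
  · exact not_orbitsNoCrossing_of_min (by simp) ((List.nodup_rotate (n := 1)).2 hne) hmin
      hγ.rotate hτ.rotate
  · exact not_orbitsNoCrossing_of_min (by simp) ((List.nodup_rotate (n := 2)).2 hne) hmin
      hγ.rotate.rotate hτ.rotate.rotate
  · exact not_orbitsNoCrossing_of_min (by simp) ((List.nodup_rotate (n := 3)).2 hne) hmin
      hγ.rotate.rotate.rotate hτ.rotate.rotate.rotate

theorem not_mapsSwap_of_not_annConnected {S : Set (Fin (p + q))} (hconn : ¬ AnnConnected p q τ)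
    (hxS : x ∈ S) (hx : x ∈ extSet p q) (hy : y ∈ intSet p q) : ¬ MapsSwap (⇑τ) S x y := by
  intro h
  have := mem_extSet_iff_of_sameCycle hconn (h.1 ▸ sameCycle_induced hxS)
  simp only [mem_extSet, mem_intSet] at this hx hy
  omega

theorem annNC_iff_orbitsNoCrossing (hstd : AnnStandard p q τ) (hconn : ¬ AnnConnected p q τ) :
    AnnNC p q τ ↔ OrbitsNoCrossing τ := by
  refine ⟨?_, fun h => ⟨hstd, fun h1 => not_orbitsNoCrossing_of_AC1 h1 h, ?_, ?_⟩⟩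
  · rintro ⟨-, hAC1, -, -⟩ ⟨a, b, c, d, hab, hbc, hcd, hac, hbd, hnab⟩
    have h1 := mem_extSet_iff_of_sameCycle hconn hac
    have h2 := mem_extSet_iff_of_sameCycle hconn hbd
    exact hAC1 (AC1_of_crossing hab hbc hcd (by simp only [mem_extSet] at h1 h2 ⊢; omega)
      hac hbd hnab)
  · rintro ⟨a, b, c, x, y, -, hx, hy, -, -, hswap⟩
    exact not_mapsSwap_of_not_annConnected hconn (by simp) hx hy hswap
  · rintro ⟨a, b, c, d, x, y, -, hx, hy, -, -, hswap⟩
    exact not_mapsSwap_of_not_annConnected hconn (by simp) hx hy hswap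

theorem annStandard_of_eqOn_induced (hconn : ¬ AnnConnected p q τ)
    (hτ : ∀ A, IsOrbit τ A → Set.EqOn τ (induced (⇑(gammaAnn p q)) A) A) :
    AnnStandard p q τ := by
  refine ⟨fun A hA => ⟨fun b hb => ?_, fun b hb => ?_⟩,
    fun A hA h1 h2 => (hconn ⟨A, hA, h1, h2⟩).elim⟩
  all_goals
    obtain ⟨x, rfl⟩ := hA
    have hside : ∀ z ∈ {z | τ.SameCycle x z}, (z ∈ extSet p q ↔ b ∈ extSet p q) :=
      fun z hz => mem_extSet_iff_of_sameCycle hconn (hz.symm.trans hb.1)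
    have hτb : τ b ∈ {z | τ.SameCycle x z} := Perm.sameCycle_apply_right.2 hb.1
  · have hsub : {z | τ.SameCycle x z} ⊆ extSet p q := fun z hz => (hside z hz).2 hb.2
    rw [Set.inter_eq_left.2 hsub, induced_eq_apply hτb, hτ _ ⟨x, rfl⟩ hb.1,
      induced_congr (iterate_gammaExt hb.2)]
  · have hsub : {z | τ.SameCycle x z} ⊆ intSet p q := fun z hz => by
      have := hside z hz
      have hb := hb.2
      simp only [mem_extSet, mem_intSet] at this hb ⊢
      omega
    rw [Set.inter_eq_left.2 hsub, induced_eq_apply hτb, hτ _ ⟨x, rfl⟩ hb.1,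
      induced_congr (iterate_gammaInt hb.2)]

end Annulus

theorem stmt_6_general (p q : ℕ) (π : Set (Set (Fin (p + q))))
    (hpart : Setoid.IsPartition π)
    (hnoconn : ∀ B ∈ π, ¬ ConnectingBlock p q B) :
    (∃ τ : Equiv.Perm (Fin (p + q)), AnnNC p q τ ∧ {A | IsOrbit τ A} = π) ↔
      NoCrossing {B | B ∈ π ∧ B ⊆ extSet p q} ∧
      NoCrossing {B | B ∈ π ∧ B ⊆ intSet p q} := by
  have hconn : ∀ τ : Perm (Fin (p + q)), {A | IsOrbit τ A} = π → ¬ AnnConnected p q τ :=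
    fun τ hτ ⟨A, hA, hAc⟩ => hnoconn A (hτ ▸ hA) hAc
  rw [noCrossing_sides_iff hnoconn]
  constructor
  · rintro ⟨τ, hτ, rfl⟩
    exact noCrossing_setOf_isOrbit_iff.2 ((annNC_iff_orbitsNoCrossing hτ.1 (hconn τ rfl)).1 hτ)
  · intro hnc
    obtain ⟨τ, hπ, hτ⟩ := exists_perm_setOf_isOrbit_eq (gammaAnn p q) hpart
      fun B hB x hx y hy => sameCycle_gammaAnn_iff.2
        (mem_extSet_iff_of_not_connectingBlock (hnoconn B hB) hx hy)
    subst hπ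
    have hstd := annStandard_of_eqOn_induced (hconn τ rfl) hτ
    exact ⟨τ, (annNC_iff_orbitsNoCrossing hstd (hconn τ rfl)).2
      (noCrossing_setOf_isOrbit_iff.1 hnc), rfl⟩

/-- Proposition 4.5 1°: a partition `π` of `[p+q]` with no `(p,q)`-connecting block
(so `π = π_ext ∪ π_int`, where `π_ext` consists of the blocks contained in `{1,…,p}` and
`π_int` of the blocks contained in `{p+1,…,p+q}`) belongs to `NC_ann(p,q)` iff
`π_ext ∈ NC_disc({1,…,p})` and `π_int ∈ NC_disc({p+1,…,p+q})`. -/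
theorem stmt_6 (p q : ℕ) (hp : 0 < p) (hq : 0 < q) (π : Set (Set (Fin (p + q))))
    (hpart : Setoid.IsPartition π)
    (hnoconn : ∀ B ∈ π, ¬ ConnectingBlock p q B) :
    (∃ τ : Equiv.Perm (Fin (p + q)), AnnNC p q τ ∧ {A | IsOrbit τ A} = π) ↔
      NoCrossing {B | B ∈ π ∧ B ⊆ extSet p q} ∧
      NoCrossing {B | B ∈ π ∧ B ⊆ intSet p q} :=
  stmt_6_general p q π hpart hnoconn
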